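/- arXiv:math/0006164 — 2 statements merged into one kernel-verified Lean document; each statement's English description precedes it below -/
import Mathlib

section
/- With the notation A(n,d) = ∑ g_n(i_1,...,i_d) where the sum is over a+1 ≤ i_1,...,i_d ≤ b and g_n counts avoiders of σ^a P_{l,m} with prescribed first d values, for n ≥ k+1 and 1 ≤ d ≤ l-1 one has A(n, d+1) = A(n,d) - (m-d) A(n-1, d) - d A(n-1, d-1). -/
open Finset Equiv

/-- `π` contains the pattern `τ`: some increasing subsequence of `π` is
order-isomorphic to `τ`. -/
def PContains {k n : ℕ} (τ : Equiv.Perm (Fin k)) (π : Equiv.Perm (Fin n)) : Prop :=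
  ∃ f : Fin k ↪o Fin n, ∀ i j : Fin k, τ i < τ j ↔ π (f i) < π (f j)

/-- `π` avoids every pattern in `T`. -/
def PAvoids {k n : ℕ} (π : Equiv.Perm (Fin n)) (T : Set (Equiv.Perm (Fin k))) : Prop :=
  ∀ τ ∈ T, ¬ PContains τ π

/-- The coset `σ^a P_{l,m}` of the maximal parabolic subgroup of `S_k` (`k = l+m`):
`τ ∈ σ^a P_{l,m}` iff the first `l` (1-based) values of `τ` are a permutation of
`{a+1, ..., a+l}` taken modulo `k` (in 0-based terms: `(τ j - a) mod k < l`). -/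
def sigmaP (k l a : ℕ) : Set (Equiv.Perm (Fin k)) :=
  {τ | ∀ j : Fin k, (j : ℕ) < l → ((τ j : ℕ) + k - a) % k < l}

/-- The number of permutations of `S_n` avoiding every pattern in `T ⊆ S_k`. -/
noncomputable def avoidersCard (k : ℕ) (T : Set (Equiv.Perm (Fin k))) (n : ℕ) : ℕ :=
  {π : Equiv.Perm (Fin n) | PAvoids π T}.ncard

/-- `g_n(i_1,...,i_d)`: the number of permutations in `S_n` avoiding `σ^a P_{l,m}`
whose value at (1-based) position `p` equals `i p` for `1 ≤ p ≤ d` (values 1-based). -/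
noncomputable def gCount (l m a n d : ℕ) (i : ℕ → ℕ) : ℕ :=
  {π : Equiv.Perm (Fin n) | PAvoids π (sigmaP (l + m) l a) ∧
    ∀ j : Fin n, (j : ℕ) < d → (π j : ℕ) + 1 = i ((j : ℕ) + 1)}.ncard

/-- `A(n,d) = ∑ g_n(i_1,...,i_d)` over all `a+1 ≤ i_1, ..., i_d ≤ b` with `b = n-m+a`. -/
noncomputable def ACount (l m a n d : ℕ) : ℕ :=
  ∑ iv ∈ Fintype.piFinset (fun _ : Fin d => Finset.Icc (a + 1) (n - m + a)),
    gCount l m a n d (fun p => if h : p - 1 < d then iv ⟨p - 1, h⟩ else 0)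

/-!
Write `prefixCount ν t P` for the number of avoiders of size `ν` whose first `t` values satisfy
`P`; then `A(n, d)` counts the avoiders whose first `d` values lie in the window `[a+1, b]`.
Deleting an entry preserves avoidance, and inserting an out-of-window value among the first `l`
positions does too, so fixing such a value at a position `< l` is a bijection onto avoiders of
size `n - 1` with a shifted window. Splitting `A(n, d)` by the value at position `d + 1`
(in the window, one of the `a` values below it, or one of the `m - a` above it) and the shifted
counts by the position of the one extra value `a` (resp. `b + 1`) they allow gives linear
relations between the counts at sizes `n`, `n - 1`, `n - 2`, which combine to the recurrence.
-/

namespace Fin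

variable {k n : ℕ} {f : Fin k → Fin n}

theorem le_val_of_strictMono (hf : StrictMono f) (i : Fin k) : (i : ℕ) ≤ f i :=
  calc (i : ℕ) = #(Iio i) := (card_Iio i).symm
    _ ≤ #(Iio (f i)) :=
      card_le_card_of_injOn f (fun _ hx => mem_Iio.2 (hf (mem_Iio.1 hx))) hf.injective.injOn
    _ = f i := card_Iio _

theorem sub_val_le_sub_val_of_strictMono (hf : StrictMono f) (i : Fin k) :
    k - i ≤ n - f i :=
  calc k - i = #(Ici i) := (card_Ici i).symm
    _ ≤ #(Ici (f i)) :=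
      card_le_card_of_injOn f (fun _ hx => mem_Ici.2 (hf.monotone (mem_Ici.1 hx)))
        hf.injective.injOn
    _ = n - f i := card_Ici _

theorem val_succAbove (p : Fin (n + 1)) (i : Fin n) :
    (p.succAbove i : ℕ) = if (i : ℕ) < p then (i : ℕ) else i + 1 := by
  unfold succAbove
  split_ifs <;> simp_all [lt_def]

end Fin

namespace Equiv.Perm

variable {N : ℕ}

/-- The permutation of `Fin (N+1)` sending `j` to `c` whose other values are those of `ρ`,
in the same relative order. -/
def insertAt (j c : Fin (N + 1)) (ρ : Perm (Fin N)) : Perm (Fin (N + 1)) :=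
  (finSuccEquiv' j).trans (ρ.optionCongr.trans (finSuccEquiv' c).symm)

def removeAt (j c : Fin (N + 1)) (π : Perm (Fin (N + 1))) : Perm (Fin N) :=
  removeNone ((finSuccEquiv' j).symm.trans (π.trans (finSuccEquiv' c)))

@[simp]
theorem insertAt_apply_self (j c : Fin (N + 1)) (ρ : Perm (Fin N)) : insertAt j c ρ j = c := by
  simp [insertAt]

@[simp]
theorem insertAt_apply_succAbove (j c : Fin (N + 1)) (ρ : Perm (Fin N)) (x : Fin N) :
    insertAt j c ρ (j.succAbove x) = c.succAbove (ρ x) := by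
  simp [insertAt]

@[simp]
theorem removeAt_insertAt (j c : Fin (N + 1)) (ρ : Perm (Fin N)) :
    removeAt j c (insertAt j c ρ) = ρ := by
  have : (finSuccEquiv' j).symm.trans ((insertAt j c ρ).trans (finSuccEquiv' c)) =
      ρ.optionCongr := by
    ext x; simp [insertAt]
  rw [removeAt, this, removeNone_optionCongr]

theorem apply_succAbove_eq_succAbove_removeAt {j c : Fin (N + 1)} {π : Perm (Fin (N + 1))}
    (hπ : π j = c) (x : Fin N) : π (j.succAbove x) = c.succAbove (removeAt j c π x) := by
  set e := (finSuccEquiv' j).symm.trans (π.trans (finSuccEquiv' c))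
  obtain ⟨y, hy⟩ : ∃ y, c.succAbove y = π (j.succAbove x) :=
    Fin.exists_succAbove_eq fun h => Fin.succAbove_ne j x (π.injective (h.trans hπ.symm))
  have hey : e (some x) = some y := by simp [e, ← hy]
  have hrem : removeNone e x = y := Option.some_injective _ ((removeNone_some e ⟨y, hey⟩).trans hey)
  rw [← hy, removeAt, hrem]

theorem insertAt_removeAt {j c : Fin (N + 1)} {π : Perm (Fin (N + 1))} (hπ : π j = c) :
    insertAt j c (removeAt j c π) = π := by
  ext i : 1
  rcases eq_or_ne i j with rfl | h
  · simp [hπ]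
  · obtain ⟨x, rfl⟩ := Fin.exists_succAbove_eq h
    rw [insertAt_apply_succAbove, apply_succAbove_eq_succAbove_removeAt hπ]

end Equiv.Perm

section Patterns

open Equiv.Perm

variable {k N : ℕ} {τ : Perm (Fin k)}

theorem PContains.insertAt {ρ : Perm (Fin N)} (h : PContains τ ρ) (j c : Fin (N + 1)) :
    PContains τ (insertAt j c ρ) := by
  obtain ⟨f, hf⟩ := h
  refine ⟨f.trans (Fin.succAboveOrderEmb j), fun i i' => ?_⟩
  simpa [Fin.succAbove_lt_succAbove_iff] using hf i i'

theorem PAvoids.removeAt {l a : ℕ} {π : Perm (Fin (N + 1))} {j c : Fin (N + 1)} (hπ : π j = c)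
    (h : PAvoids π (sigmaP k l a)) : PAvoids (removeAt j c π) (sigmaP k l a) := fun τ hτ hc =>
  h τ hτ (insertAt_removeAt hπ ▸ hc.insertAt j c)

theorem pContains_of_insertAt {ρ : Perm (Fin N)} {j c : Fin (N + 1)} {f : Fin k ↪o Fin (N + 1)}
    (hf : ∀ i i', τ i < τ i' ↔ insertAt j c ρ (f i) < insertAt j c ρ (f i'))
    (hj : ∀ i, f i ≠ j) : PContains τ ρ := by
  choose g hg using fun i => Fin.exists_succAbove_eq (hj i)
  have hgm : StrictMono g := fun i i' h =>
    Fin.succAbove_lt_succAbove_iff.1 (by rw [hg, hg]; exact f.strictMono h)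
  refine ⟨OrderEmbedding.ofStrictMono g hgm, fun i i' => ?_⟩
  simpa [← hg, Fin.succAbove_lt_succAbove_iff] using hf i i'

theorem le_apply_and_sub_le_of_occurrence {π : Perm (Fin N)} {f : Fin k ↪o Fin N}
    (hf : ∀ i i', τ i < τ i' ↔ π (f i) < π (f i')) (i : Fin k) :
    (τ i : ℕ) ≤ π (f i) ∧ k - τ i ≤ N - π (f i) := by
  have hg : StrictMono fun v => π (f (τ.symm v)) := fun v v' h => by
    simpa using (hf (τ.symm v) (τ.symm v')).1 (by simpa using h)
  simpa using And.intro (Fin.le_val_of_strictMono hg (τ i))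
    (Fin.sub_val_le_sub_val_of_strictMono hg (τ i))

end Patterns

namespace SigmaPAvoidance

open Equiv.Perm

variable {l m a : ℕ}

theorem le_and_lt_of_mem_sigmaP (ha : a ≤ m) {τ : Perm (Fin (l + m))} (hτ : τ ∈ sigmaP (l + m) l a)
    {j : Fin (l + m)} (hj : (j : ℕ) < l) : a ≤ τ j ∧ (τ j : ℕ) < a + l := by
  have hmod := hτ j hj
  have hlt := (τ j).isLt
  by_cases h : a ≤ τ j
  · rw [show (τ j : ℕ) + (l + m) - a = (τ j - a) + (l + m) by omega, Nat.add_mod_right,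
      Nat.mod_eq_of_lt (by omega)] at hmod
    omega
  · rw [Nat.mod_eq_of_lt (by omega)] at hmod
    omega

/-- The 0-based form of the value range `[a+1, b]`, `b = ν - m + a`, of permutations of size `ν`. -/
def window (a m ν : ℕ) (v : Fin ν) : Prop :=
  a ≤ v ∧ (v : ℕ) + m < ν + a

/-- The inserted entry would have to play one of the first `l` entries of the pattern, whose values
lie in `[a, a + l)`; that needs `a` smaller and `m - a` larger values in `π`. -/
theorem PAvoids.insertAt (ha : a ≤ m) {N : ℕ} {j c : Fin (N + 1)} (hj : (j : ℕ) < l)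
    (hc : ¬ window a m (N + 1) c) {ρ : Perm (Fin N)} (hρ : PAvoids ρ (sigmaP (l + m) l a)) :
    PAvoids (insertAt j c ρ) (sigmaP (l + m) l a) := by
  rintro τ hτ ⟨f, hf⟩
  by_cases hmiss : ∀ i, f i ≠ j
  · exact hρ τ hτ (pContains_of_insertAt hf hmiss)
  push Not at hmiss
  obtain ⟨i, rfl⟩ := hmiss
  have hil : (i : ℕ) < l := (Fin.le_val_of_strictMono f.strictMono i).trans_lt hj
  obtain ⟨hlo, hhi⟩ := le_and_lt_of_mem_sigmaP ha hτ hil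
  have hbounds := le_apply_and_sub_le_of_occurrence hf i
  rw [insertAt_apply_self] at hbounds
  exact hc ⟨by omega, by omega⟩

section Window

variable {ν : ℕ}

theorem window_succAbove_of_lt {c : Fin (ν + 1)} (hc : (c : ℕ) < a) (x : Fin ν) :
    window a m (ν + 1) (c.succAbove x) ↔ window a m (ν + 1) x.succ := by
  simp only [window, Fin.val_succAbove, Fin.val_succ]
  split_ifs <;> omega

theorem window_succAbove_of_le {c : Fin (ν + 1)} (hc : ν + 1 + a ≤ c + m) (x : Fin ν) :
    window a m (ν + 1) (c.succAbove x) ↔ window a m (ν + 1) x.castSucc := by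
  simp only [window, Fin.val_succAbove, Fin.val_castSucc]
  split_ifs <;> omega

theorem window_succ_iff {c : Fin ν} (hc : (c : ℕ) + 1 = a) (hm : m ≤ ν) (x : Fin ν) :
    window a m (ν + 1) x.succ ↔ window a m ν x ∨ x = c := by
  simp only [window, Fin.val_succ, Fin.ext_iff]
  omega

theorem window_castSucc_iff {c : Fin ν} (hc : (c : ℕ) + m = ν + a) (hm : m ≤ ν) (x : Fin ν) :
    window a m (ν + 1) x.castSucc ↔ window a m ν x ∨ x = c := by
  simp only [window, Fin.val_castSucc, Fin.ext_iff]
  omega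

open scoped Classical in
theorem sum_not_window (ha : a ≤ m) (hm : m ≤ ν) (f : Fin ν → ℕ) {x y : ℕ}
    (hlow : ∀ c : Fin ν, (c : ℕ) < a → f c = x) (hhigh : ∀ c : Fin ν, ν + a ≤ c + m → f c = y) :
    ∑ c with ¬ window a m ν c, f c = a * x + (m - a) * y := by
  rw [← sum_filter_add_sum_filter_not _ fun c : Fin ν => (c : ℕ) < a, filter_filter,
    filter_filter]
  have hlow' : univ.filter (fun c : Fin ν => ¬ window a m ν c ∧ (c : ℕ) < a) =
      univ.filter fun c : Fin ν => (c : ℕ) < a :=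
    filter_congr fun c _ => by simp only [window]; omega
  have hhigh' : univ.filter (fun c : Fin ν => ¬ window a m ν c ∧ ¬ (c : ℕ) < a) =
      univ.filter fun c : Fin ν => ¬ (c : ℕ) < ν + a - m :=
    filter_congr fun c _ => by simp only [window]; omega
  have hcard := card_filter_add_card_filter_not (s := univ) fun c : Fin ν => (c : ℕ) < ν + a - m
  rw [Fin.card_filter_val_lt, card_univ, Fintype.card_fin] at hcard
  rw [hlow', hhigh', sum_const_nat fun c hc => hlow c (mem_filter.1 hc).2,
    sum_const_nat fun c hc => hhigh c (by have := (mem_filter.1 hc).2; omega),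
    Fin.card_filter_val_lt]
  congr 2 <;> omega

end Window

section Counting

open scoped Classical

variable {N e : ℕ}

noncomputable def avoiders (l m a ν : ℕ) : Finset (Perm (Fin ν)) :=
  {π | PAvoids π (sigmaP (l + m) l a)}

noncomputable def prefixCount (l m a ν t : ℕ) (P : Fin ν → Prop) : ℕ :=
  #{π ∈ avoiders l m a ν | ∀ i : Fin ν, (i : ℕ) < t → P (π i)}

theorem mem_avoiders {ν : ℕ} {π : Perm (Fin ν)} :
    π ∈ avoiders l m a ν ↔ PAvoids π (sigmaP (l + m) l a) := by
  simp [avoiders]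

theorem card_avoiders_apply_eq (ha : a ≤ m) {t : ℕ} (ht : t < l) {j c : Fin (N + 1)}
    (hj : (j : ℕ) ≤ t) (hc : ¬ window a m (N + 1) c) (P : Fin (N + 1) → Prop) :
    #{π ∈ avoiders l m a (N + 1) | π j = c ∧ ∀ i, i ≠ j → (i : ℕ) ≤ t → P (π i)} =
      prefixCount l m a N t (P ∘ c.succAbove) := by
  refine card_bij' (fun π _ => removeAt j c π) (fun ρ _ => insertAt j c ρ) ?_ ?_ ?_ ?_
  · simp only [mem_filter, mem_avoiders, Function.comp_apply, and_imp]
    intro π hπ hπj hP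
    refine ⟨hπ.removeAt hπj, fun x hx => ?_⟩
    rw [← apply_succAbove_eq_succAbove_removeAt hπj]
    refine hP _ (Fin.succAbove_ne j x) ?_
    rw [Fin.val_succAbove]
    split_ifs <;> omega
  · simp only [mem_filter, mem_avoiders, Function.comp_apply, and_imp]
    intro ρ hρ hP
    refine ⟨PAvoids.insertAt ha (by omega) hc hρ, insertAt_apply_self j c ρ, fun i hij hit => ?_⟩
    obtain ⟨x, rfl⟩ := Fin.exists_succAbove_eq hij
    rw [insertAt_apply_succAbove]
    refine hP x ?_
    rw [Fin.val_succAbove] at hit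
    split_ifs at hit <;> omega
  · intro π hπ
    exact insertAt_removeAt (mem_filter.1 hπ).2.1
  · intro ρ _
    exact removeAt_insertAt j c ρ

theorem prefixCount_eq_prefixCount_succ_add_sum (ha : a ≤ m) (he : e < l)
    (heN : e < N + 1) {P : Fin (N + 1) → Prop} (hP : ∀ c, ¬ P c → ¬ window a m (N + 1) c) :
    prefixCount l m a (N + 1) e P = prefixCount l m a (N + 1) (e + 1) P +
      ∑ c with ¬ P c, prefixCount l m a N e (P ∘ c.succAbove) := by
  set p : Fin (N + 1) := ⟨e, heN⟩
  set S := {π ∈ avoiders l m a (N + 1) | ∀ i : Fin (N + 1), (i : ℕ) < e → P (π i)}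
  have hlt : ∀ i : Fin (N + 1), (i : ℕ) < e ↔ i ≠ p ∧ (i : ℕ) ≤ e := fun i => by
    simp only [ne_eq, Fin.ext_iff, p]; omega
  have hin : #{π ∈ S | π p ∈ ({c | P c} : Finset _)} = prefixCount l m a (N + 1) (e + 1) P := by
    simp only [prefixCount, S, filter_filter, mem_filter, mem_univ, true_and]
    congr 1
    refine filter_congr fun π _ => ⟨fun ⟨h, hp⟩ i hi => ?_, fun h => ⟨fun i hi => h i (by omega),
      h p (by simp [p])⟩⟩
    rcases Nat.lt_or_ge i e with hie | hie
    · exact h i hie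
    · rwa [show i = p from Fin.ext (by simp [p]; omega)]
  have hout : ∀ c, ¬ P c → #{π ∈ S | π p = c} = prefixCount l m a N e (P ∘ c.succAbove) := by
    intro c hc
    rw [← card_avoiders_apply_eq ha he (j := p) le_rfl (hP c hc)]
    simp only [S, filter_filter, hlt, and_imp]
    exact congrArg card (filter_congr fun π _ => and_comm)
  calc prefixCount l m a (N + 1) e P = ∑ c, #{π ∈ S | π p = c} :=
        card_eq_sum_card_fiberwise fun _ _ => mem_coe.2 (mem_univ _)
    _ = ∑ c with P c, #{π ∈ S | π p = c} + ∑ c with ¬ P c, #{π ∈ S | π p = c} :=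
        (sum_filter_add_sum_filter_not _ _ _).symm
    _ = _ := by
        rw [sum_card_fiberwise_eq_card_filter, hin]
        exact congrArg _ (sum_congr rfl fun c hc => hout c (mem_filter.1 hc).2)

theorem prefixCount_or_eq (ha : a ≤ m) (he : e < l) (heN : e < N + 1)
    {P : Fin (N + 1) → Prop} {c : Fin (N + 1)} (hc : ¬ window a m (N + 1) c) (hPc : ¬ P c) :
    prefixCount l m a (N + 1) (e + 1) (fun v => P v ∨ v = c) =
      prefixCount l m a (N + 1) (e + 1) P + (e + 1) * prefixCount l m a N e (P ∘ c.succAbove) := by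
  set p : Fin (N + 1) := ⟨e, heN⟩
  set T := {π ∈ avoiders l m a (N + 1) | ∀ i : Fin (N + 1), (i : ℕ) < e + 1 → P (π i) ∨ π i = c}
  have hle : ∀ i : Fin (N + 1), i ∈ Iic p ↔ (i : ℕ) < e + 1 := fun i => by
    simp [p, Fin.le_def]
  have hfiber : ∀ j ∈ Iic p, #{π ∈ T | π.symm c = j} = prefixCount l m a N e (P ∘ c.succAbove) := by
    intro j hj
    rw [hle] at hj
    rw [← card_avoiders_apply_eq ha he (Nat.lt_succ_iff.1 hj) hc]
    simp only [T, filter_filter, symm_apply_eq]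
    refine congrArg card (filter_congr fun π _ => ⟨fun ⟨hP, hj⟩ => ⟨hj.symm, fun i hij hie => ?_⟩,
      fun ⟨hj, hP⟩ => ⟨fun i hie => ?_, hj.symm⟩⟩)
    · exact (hP i (by omega)).resolve_right fun h => hij (π.injective (h.trans hj))
    · rcases eq_or_ne i j with rfl | hij
      · exact Or.inr hj
      · exact Or.inl (hP i hij (by omega))
  have hnone : #{π ∈ T | π.symm c ∉ Iic p} = prefixCount l m a (N + 1) (e + 1) P := by
    simp only [T, prefixCount, filter_filter, hle]
    refine congrArg card (filter_congr fun π _ => ⟨fun ⟨hP, hcp⟩ i hi => ?_,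
      fun hP => ⟨fun i hi => Or.inl (hP i hi), fun hcp => hPc ?_⟩⟩)
    · refine (hP i hi).resolve_right fun h => hcp ?_
      rwa [← h, symm_apply_apply]
    · simpa using hP _ hcp
  calc prefixCount l m a (N + 1) (e + 1) (fun v => P v ∨ v = c)
      = #{π ∈ T | π.symm c ∈ Iic p} + #{π ∈ T | π.symm c ∉ Iic p} := by
        rw [card_filter_add_card_filter_not]; simp only [prefixCount, T]
    _ = ∑ j ∈ Iic p, #{π ∈ T | π.symm c = j} + prefixCount l m a (N + 1) (e + 1) P := by
        rw [sum_card_fiberwise_eq_card_filter, hnone]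
    _ = _ := by
        rw [sum_const_nat hfiber, Fin.card_Iic, add_comm]

theorem prefixCount_window (ha : a ≤ m) (he : e < l) (heN : e < N + 1) (hm : m ≤ N + 1) :
    prefixCount l m a (N + 1) e (window a m (N + 1)) =
      prefixCount l m a (N + 1) (e + 1) (window a m (N + 1)) +
        (a * prefixCount l m a N e (window a m (N + 1) ∘ Fin.succ) +
          (m - a) * prefixCount l m a N e (window a m (N + 1) ∘ Fin.castSucc)) := by
  rw [prefixCount_eq_prefixCount_succ_add_sum ha he heN fun _ h => h]
  congr 1
  refine sum_not_window ha hm _ (fun c hc => ?_) (fun c hc => ?_) <;> congr 1 <;> ext x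
  · exact window_succAbove_of_lt hc x
  · exact window_succAbove_of_le hc x

theorem prefixCount_window_comp_succ (ha : a ≤ m) (ha0 : 0 < a) (he : e < l) (heN : e < N + 1)
    (hm : m ≤ N + 1) :
    prefixCount l m a (N + 1) (e + 1) (window a m (N + 2) ∘ Fin.succ) =
      prefixCount l m a (N + 1) (e + 1) (window a m (N + 1)) +
        (e + 1) * prefixCount l m a N e (window a m (N + 1) ∘ Fin.succ) := by
  set c : Fin (N + 1) := ⟨a - 1, by omega⟩
  have hca : (c : ℕ) < a := by simp [c]; omega
  have hc : ¬ window a m (N + 1) c := fun h => by simp only [window] at h; omega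
  have hsucc : window a m (N + 2) ∘ Fin.succ = fun v => window a m (N + 1) v ∨ v = c := by
    ext x; exact window_succ_iff (by simp [c]; omega) hm x
  have hsuccAbove : window a m (N + 1) ∘ c.succAbove = window a m (N + 1) ∘ Fin.succ := by
    ext x; exact window_succAbove_of_lt hca x
  rw [hsucc, prefixCount_or_eq ha he heN hc hc, hsuccAbove]

theorem prefixCount_window_comp_castSucc (ha : a < m) (he : e < l) (heN : e < N + 1)
    (hm : m ≤ N + 1) :
    prefixCount l m a (N + 1) (e + 1) (window a m (N + 2) ∘ Fin.castSucc) =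
      prefixCount l m a (N + 1) (e + 1) (window a m (N + 1)) +
        (e + 1) * prefixCount l m a N e (window a m (N + 1) ∘ Fin.castSucc) := by
  set c : Fin (N + 1) := ⟨N + 1 + a - m, by omega⟩
  have hcm : N + 1 + a ≤ c + m := by simp [c]; omega
  have hc : ¬ window a m (N + 1) c := fun h => by simp only [window] at h; omega
  have hcastSucc : window a m (N + 2) ∘ Fin.castSucc = fun v => window a m (N + 1) v ∨ v = c := by
    ext x; exact window_castSucc_iff (by simp [c]; omega) hm x
  have hsuccAbove : window a m (N + 1) ∘ c.succAbove = window a m (N + 1) ∘ Fin.castSucc := by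
    ext x; exact window_succAbove_of_le hcm x
  rw [hcastSucc, prefixCount_or_eq ha.le he heN hc hc, hsuccAbove]

theorem ACount_eq_prefixCount {n d : ℕ} (hd : d ≤ n) :
    ACount l m a n d = prefixCount l m a n d (window a m n) := by
  set prefixValues : Perm (Fin n) → Fin d → ℕ := fun π q => π (Fin.castLE hd q) + 1
  have hg : ∀ iv : Fin d → ℕ,
      gCount l m a n d (fun p => if h : p - 1 < d then iv ⟨p - 1, h⟩ else 0) =
        #{π ∈ avoiders l m a n | prefixValues π = iv} := by
    intro iv
    rw [gCount, Set.ncard_eq_toFinset_card']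
    congr 1
    ext π
    simp only [Set.toFinset_ofPred, mem_filter, mem_univ, true_and, mem_avoiders,
      Nat.add_sub_cancel, funext_iff, prefixValues]
    refine and_congr_right fun _ => ⟨fun h q => ?_, fun h j hj => ?_⟩
    · simpa using h (Fin.castLE hd q) q.isLt
    · simpa [hj] using h ⟨j, hj⟩
  rw [ACount, sum_congr rfl fun iv _ => hg iv, sum_card_fiberwise_eq_card_filter, prefixCount]
  congr 1
  refine filter_congr fun π _ => ?_
  simp only [prefixValues, Fintype.mem_piFinset, mem_Icc, window]
  refine ⟨fun h i hi => ?_, fun h q => ?_⟩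
  · have := h ⟨i, hi⟩
    simp only [Fin.castLE_mk, Fin.eta] at this
    omega
  · have := h (Fin.castLE hd q) q.isLt
    omega

end Counting

end SigmaPAvoidance

open SigmaPAvoidance

theorem ACount_recurrence_general (l m a n d : ℕ)
    (ha : a ≤ m) (hn : l + m + 1 ≤ n) (hd : 1 ≤ d) (hdl : d ≤ l - 1) :
    (ACount l m a n (d + 1) : ℤ)
      = (ACount l m a n d : ℤ) - ((m : ℤ) - d) * (ACount l m a (n - 1) d : ℤ)
          - (d : ℤ) * (ACount l m a (n - 1) (d - 1) : ℤ) := by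
  obtain ⟨N, rfl⟩ : ∃ N, n = N + 2 := ⟨n - 2, by omega⟩
  obtain ⟨e, rfl⟩ : ∃ e, d = e + 1 := ⟨d - 1, by omega⟩
  rw [show N + 2 - 1 = N + 1 by omega, Nat.add_sub_cancel, ACount_eq_prefixCount (by omega),
    ACount_eq_prefixCount (by omega), ACount_eq_prefixCount (by omega),
    ACount_eq_prefixCount (by omega)]
  have hsplit := prefixCount_window (l := l) ha (N := N + 1) (e := e + 1) (by omega) (by omega)
    (by omega)
  have hsplit' := prefixCount_window (l := l) ha (N := N) (e := e) (by omega) (by omega) (by omega)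
  have hlow : a * prefixCount l m a (N + 1) (e + 1) (window a m (N + 2) ∘ Fin.succ) =
      a * (prefixCount l m a (N + 1) (e + 1) (window a m (N + 1)) +
        (e + 1) * prefixCount l m a N e (window a m (N + 1) ∘ Fin.succ)) := by
    rcases a.eq_zero_or_pos with rfl | ha0
    · simp
    · rw [prefixCount_window_comp_succ ha ha0 (by omega) (by omega) (by omega)]
  have hhigh : (m - a) * prefixCount l m a (N + 1) (e + 1) (window a m (N + 2) ∘ Fin.castSucc) =
      (m - a) * (prefixCount l m a (N + 1) (e + 1) (window a m (N + 1)) +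
        (e + 1) * prefixCount l m a N e (window a m (N + 1) ∘ Fin.castSucc)) := by
    rcases ha.lt_or_eq with ha' | rfl
    · rw [prefixCount_window_comp_castSucc ha' (by omega) (by omega) (by omega)]
    · simp
  zify [ha] at hsplit hsplit' hlow hhigh
  push_cast
  linear_combination -hsplit - hlow - hhigh + ((e : ℤ) + 1) * hsplit'

theorem ACount_recurrence (l m a n d : ℕ) (hl : 1 ≤ l) (hm : 1 ≤ m)
    (ha : a ≤ m) (hn : l + m + 1 ≤ n) (hd : 1 ≤ d) (hdl : d ≤ l - 1) :
    (ACount l m a n (d + 1) : ℤ)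
      = (ACount l m a n d : ℤ) - ((m : ℤ) - d) * (ACount l m a (n - 1) d : ℤ)
          - (d : ℤ) * (ACount l m a (n - 1) (d - 1) : ℤ) :=
  ACount_recurrence_general l m a n d ha hn hd hdl
end

section
/- With the notation of the avoidance counting problem, for n ≥ k and 1 ≤ d ≤ l one has A(n,d) = ∑_{j=0}^{d} (-1)^j j! C(m,j) C(d,j) f(n-j), where f(n) is the number of permutations of S_n avoiding σ^a P_{l,m}. -/
open Finset Equiv

/-!
Call a value *outer* if it lies outside the window `[a+1, b]`. In an occurrence of a pattern
`τ ∈ σ^a P_{l,m}`, a point used at one of the first `l` pattern positions has at least `a` pattern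
values below it and at least `m - a` above it, so its value lies inside the window. Hence a point
`(p, v)` with `p < l` and `v` outer can be deleted from, or inserted into, a permutation without
changing whether it avoids `σ^a P_{l,m}`. Prescribing outer values at `j` of the first `l`
positions therefore leaves `m (m-1) ⋯ (m-j+1) · f(n-j)` avoiders, and inclusion–exclusion over the
set of the first `d` positions that carry an outer value gives the formula for `A(n,d)`.
-/

section Rank

variable {k n : ℕ}

lemma val_le_of_lt_iff_lt (τ : Perm (Fin k)) {g : Fin k → Fin n}
    (hg : ∀ i j, τ i < τ j ↔ g i < g j) (i : Fin k) : (τ i : ℕ) ≤ g i := by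
  have hg_inj : Function.Injective g := by
    intro i j h
    by_contra hij
    rcases lt_or_gt_of_ne (τ.injective.ne hij) with h' | h'
    · exact ((hg i j).1 h').ne h
    · exact ((hg j i).1 h').ne h.symm
  have hcard := card_le_card_of_injOn (fun y => g (τ.symm y)) (s := Iio (τ i)) (t := Iio (g i))
    (fun y hy => by simpa using (hg (τ.symm y) i).1 (by simpa using hy))
    (fun y _ z _ h => by simpa using hg_inj h)
  simpa using hcard

lemma val_le_of_strictMono {f : Fin k → Fin n} (hf : StrictMono f) (i : Fin k) :
    (i : ℕ) ≤ f i :=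
  val_le_of_lt_iff_lt (Equiv.refl _) (fun _ _ => hf.lt_iff_lt.symm) i

lemma sub_apply_le_sub_of_lt_iff_lt (τ : Perm (Fin k)) {g : Fin k → Fin n}
    (hg : ∀ i j, τ i < τ j ↔ g i < g j) (i : Fin k) : k - τ i ≤ n - g i := by
  have h := val_le_of_lt_iff_lt (τ.trans Fin.revPerm) (g := Fin.rev ∘ g)
    (fun i j => by simpa using hg j i) i
  simp only [Equiv.trans_apply, Function.comp_apply, Fin.revPerm_apply, Fin.val_rev] at h
  omega

end Rank

lemma card_preimage_succAbove {n : ℕ} (s : Finset (Fin (n + 1))) (p : Fin (n + 1)) :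
    #(s.preimage p.succAbove Fin.succAbove_right_injective.injOn) = #(s.erase p) := by
  classical
  rw [card_preimage, ← filter_ne' s p]
  simp

lemma mul_descFactorial_sub_one (k j : ℕ) :
    k * (k - 1).descFactorial j = k.descFactorial (j + 1) := by
  cases k with
  | zero => rw [zero_mul, Nat.zero_descFactorial_succ]
  | succ k => rw [Nat.succ_descFactorial_succ, Nat.add_sub_cancel]

lemma card_filter_forall_mem_eq_sum {n : ℕ} {s : Finset (Fin (n + 1))} {p : Fin (n + 1)}
    (hp : p ∈ s) (A : Finset (Perm (Fin (n + 1)))) (W : Finset (Fin (n + 1))) :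
    #{π ∈ A | ∀ q ∈ s, π q ∈ W} = ∑ v ∈ W, #{π ∈ A | π p = v ∧
      ∀ x ∈ s.preimage p.succAbove Fin.succAbove_right_injective.injOn,
        π (p.succAbove x) ∈ W} := by
  rw [card_eq_sum_card_fiberwise (f := fun π : Perm (Fin (n + 1)) => π p)
    (s := {π ∈ A | ∀ q ∈ s, π q ∈ W}) fun π hπ => (mem_filter.1 hπ).2 p hp]
  refine sum_congr rfl fun v hv => ?_
  rw [filter_filter]
  congr 1
  ext π
  simp only [mem_filter, mem_preimage]
  rw [Fin.forall_iff_succAbove p]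
  constructor
  · rintro ⟨hπ, ⟨-, h⟩, rfl⟩
    exact ⟨hπ, rfl, h⟩
  · rintro ⟨hπ, rfl, h⟩
    exact ⟨hπ, ⟨fun _ => hv, h⟩, rfl⟩

lemma card_filter_forall_not_eq_sum_powerset {ι α : Type*} [Fintype α] [DecidableEq α]
    (s : Finset α) (D : Finset ι) (R : ι → α → Prop) [∀ i, DecidablePred (R i)] :
    (#{x ∈ s | ∀ i ∈ D, ¬ R i x} : ℤ)
      = ∑ t ∈ D.powerset, (-1 : ℤ) ^ #t * #{x ∈ s | ∀ i ∈ t, R i x} := by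
  have h := inclusion_exclusion_sum_inf_compl D (fun i => {x | R i x})
    (fun x => if x ∈ s then (1 : ℤ) else 0)
  simp only [sum_boole, smul_eq_mul] at h
  have hinf (t : Finset ι) : ({x ∈ t.inf fun i => ({x | R i x} : Finset α) | x ∈ s} : Finset α)
      = {x ∈ s | ∀ i ∈ t, R i x} := by
    ext x; simp [mem_inf, and_comm]
  have hinf_compl : ({x ∈ D.inf fun i => ({x | R i x} : Finset α)ᶜ | x ∈ s} : Finset α)
      = {x ∈ s | ∀ i ∈ D, ¬ R i x} := by
    ext x; simp [mem_inf, and_comm]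
  rw [← hinf_compl, h]
  exact sum_congr rfl fun t _ => by rw [hinf t]

section InsertDelete

variable {n : ℕ} (p v : Fin (n + 1))

/-- Insert the point `(p, v)` into the graph of `π'`. -/
def insPerm (π' : Perm (Fin n)) : Perm (Fin (n + 1)) :=
  ((finSuccEquiv' p).trans (Equiv.optionCongr π')).trans (finSuccEquiv' v).symm

/-- Delete the point `(p, v)` from the graph of `π`; meaningful when `π p = v`. -/
def delPerm (π : Perm (Fin (n + 1))) : Perm (Fin n) :=
  Equiv.removeNone (((finSuccEquiv' p).symm.trans π).trans (finSuccEquiv' v))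

@[simp] lemma insPerm_apply_self (π' : Perm (Fin n)) : insPerm p v π' p = v := by
  simp [insPerm, finSuccEquiv'_at, finSuccEquiv'_symm_none]

@[simp] lemma insPerm_apply_succAbove (π' : Perm (Fin n)) (x : Fin n) :
    insPerm p v π' (p.succAbove x) = v.succAbove (π' x) := by
  simp [insPerm, finSuccEquiv'_succAbove, finSuccEquiv'_symm_some]

variable {p v}

lemma succAbove_delPerm_apply {π : Perm (Fin (n + 1))} (hπ : π p = v) (x : Fin n) :
    v.succAbove (delPerm p v π x) = π (p.succAbove x) := by
  set e := ((finSuccEquiv' p).symm.trans π).trans (finSuccEquiv' v)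
  obtain ⟨y, hy⟩ : ∃ y, v.succAbove y = π (p.succAbove x) :=
    Fin.exists_succAbove_eq (hπ ▸ π.injective.ne (Fin.succAbove_ne p x))
  have hey : e (some x) = some y := by simp [e, finSuccEquiv'_symm_some, ← hy]
  have hdel : delPerm p v π x = y :=
    Option.some_injective _ ((Equiv.removeNone_some e ⟨y, hey⟩).trans hey)
  rw [hdel, hy]

lemma insPerm_delPerm {π : Perm (Fin (n + 1))} (hπ : π p = v) :
    insPerm p v (delPerm p v π) = π := by
  ext y : 1
  rcases eq_or_ne y p with rfl | hy
  · simp [hπ]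
  · obtain ⟨x, rfl⟩ := Fin.exists_succAbove_eq hy
    rw [insPerm_apply_succAbove, succAbove_delPerm_apply hπ]

lemma delPerm_insPerm (π' : Perm (Fin n)) : delPerm p v (insPerm p v π') = π' := by
  ext x : 1
  apply Fin.succAbove_right_injective (p := v)
  rw [succAbove_delPerm_apply (insPerm_apply_self p v π'), insPerm_apply_succAbove]

end InsertDelete

open scoped Classical in
noncomputable def avoiders {k : ℕ} (T : Set (Perm (Fin k))) (n : ℕ) : Finset (Perm (Fin n)) :=
  {π | PAvoids π T}

lemma mem_avoiders {k n : ℕ} {T : Set (Perm (Fin k))} {π : Perm (Fin n)} :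
    π ∈ avoiders T n ↔ PAvoids π T := by
  simp [avoiders]

lemma ncard_setOf_PAvoids_and {k n : ℕ} (T : Set (Perm (Fin k))) (Q : Perm (Fin n) → Prop)
    [DecidablePred Q] : {π | PAvoids π T ∧ Q π}.ncard = #{π ∈ avoiders T n | Q π} := by
  rw [← Set.ncard_coe_finset]
  congr 1
  ext π
  simp [mem_avoiders]

lemma avoidersCard_eq_card_avoiders {k : ℕ} (T : Set (Perm (Fin k))) (n : ℕ) :
    avoidersCard k T n = #(avoiders T n) := by
  simpa [avoidersCard] using ncard_setOf_PAvoids_and T fun _ : Perm (Fin n) => True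

lemma PAvoids.delPerm {k n : ℕ} {T : Set (Perm (Fin k))} {p v : Fin (n + 1)}
    {π : Perm (Fin (n + 1))} (hav : PAvoids π T) (hπ : π p = v) :
    PAvoids (delPerm p v π) T := by
  rintro τ hτ ⟨f, hf⟩
  refine hav τ hτ ⟨f.trans p.succAboveOrderEmb, fun i j => ?_⟩
  simpa only [RelEmbedding.coe_trans, Function.comp_apply, Fin.succAboveOrderEmb_apply,
    ← succAbove_delPerm_apply hπ, (Fin.strictMono_succAbove v).lt_iff_lt] using hf i j

/-- The 0-based values outside the window `a ≤ v < n - m + a`, i.e. the 1-based values outside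
`[a+1, b]`. -/
def outerVals (n m a : ℕ) : Finset (Fin n) := {v | (v : ℕ) < a ∨ n - m + a ≤ v}

lemma card_outerVals {n m a : ℕ} (ha : a ≤ m) (hmn : m ≤ n) : #(outerVals n m a) = m := by
  have hval : (outerVals n m a).map Fin.valEmbedding = range a ∪ Ico (n - m + a) n := by
    ext x
    simp only [outerVals, mem_map, mem_filter, mem_univ, true_and, Fin.valEmbedding_apply,
      mem_union, mem_range, mem_Ico]
    constructor
    · rintro ⟨v, hv, rfl⟩; omega
    · intro hx; exact ⟨⟨x, by omega⟩, by dsimp only; omega, rfl⟩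
  rw [← card_map Fin.valEmbedding, hval, card_union_of_disjoint, card_range, Nat.card_Ico]
  · omega
  · exact disjoint_left.2 fun x hx hx' => by simp only [mem_range, mem_Ico] at hx hx'; omega

lemma mem_outerVals_of_succAbove_mem {n m a : ℕ} {v : Fin (n + 1)} {w : Fin n}
    (hw : v.succAbove w ∈ outerVals (n + 1) m a) : w ∈ outerVals n m a := by
  simp only [outerVals, mem_filter, mem_univ, true_and] at hw ⊢
  rcases lt_or_ge (Fin.castSucc w) v with h | h
  · rw [Fin.succAbove_of_castSucc_lt _ _ h, Fin.val_castSucc] at hw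
    omega
  · rw [Fin.succAbove_of_le_castSucc _ _ h, Fin.val_succ] at hw
    omega

lemma sigmaP_apply_bounds {l m a : ℕ} (ha : a ≤ m) {τ : Perm (Fin (l + m))}
    (hτ : τ ∈ sigmaP (l + m) l a) {i : Fin (l + m)} (hi : (i : ℕ) < l) :
    a ≤ τ i ∧ (τ i : ℕ) < a + l := by
  have h := hτ i hi
  have hk : (τ i : ℕ) < l + m := (τ i).isLt
  rcases le_or_gt a (τ i : ℕ) with h1 | h1
  · rw [show (τ i : ℕ) + (l + m) - a = ((τ i : ℕ) - a) + (l + m) by omega,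
      Nat.add_mod_right, Nat.mod_eq_of_lt (by omega)] at h
    omega
  · rw [Nat.mod_eq_of_lt (by omega)] at h
    omega

lemma notMem_outerVals_of_lt_iff_lt {l m a n : ℕ} (ha : a ≤ m) {τ : Perm (Fin (l + m))}
    (hτ : τ ∈ sigmaP (l + m) l a) {g : Fin (l + m) → Fin n}
    (hg : ∀ i j, τ i < τ j ↔ g i < g j) {i : Fin (l + m)} (hi : (i : ℕ) < l) :
    g i ∉ outerVals n m a := by
  have h₁ := val_le_of_lt_iff_lt τ hg i
  have h₂ := sub_apply_le_sub_of_lt_iff_lt τ hg i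
  have := sigmaP_apply_bounds ha hτ hi
  simp only [outerVals, mem_filter, mem_univ, true_and]
  omega

section Sigma

variable {l m a n : ℕ}

/-- An occurrence of a pattern of `σ^a P_{l,m}` through the new point `(p, v)` would have to use
it at a pattern position `i ≤ p < l`, where only values inside the window can appear. -/
lemma PAvoids.insPerm (ha : a ≤ m) {p v : Fin (n + 1)} (hp : (p : ℕ) < l)
    (hv : v ∈ outerVals (n + 1) m a) {π' : Perm (Fin n)}
    (hav : PAvoids π' (sigmaP (l + m) l a)) :
    PAvoids (insPerm p v π') (sigmaP (l + m) l a) := by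
  rintro τ hτ ⟨f, hf⟩
  by_cases hhit : ∃ i, f i = p
  · obtain ⟨i, hi⟩ := hhit
    have hil : (i : ℕ) < l :=
      (val_le_of_strictMono f.strictMono i).trans_lt (hi ▸ hp)
    exact notMem_outerVals_of_lt_iff_lt ha hτ hf hil (by simpa [hi] using hv)
  · simp only [not_exists] at hhit
    choose g hg using fun i => Fin.exists_succAbove_eq (hhit i)
    have hg_mono : StrictMono g := fun i j hij =>
      (Fin.strictMono_succAbove p).lt_iff_lt.1 (by rw [hg, hg]; exact f.strictMono hij)
    refine hav τ hτ ⟨OrderEmbedding.ofStrictMono g hg_mono, fun i j => ?_⟩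
    simpa only [OrderEmbedding.coe_ofStrictMono, ← hg, insPerm_apply_succAbove,
      (Fin.strictMono_succAbove v).lt_iff_lt] using hf i j

lemma card_filter_avoiders_apply_eq (ha : a ≤ m) {p v : Fin (n + 1)} (hp : (p : ℕ) < l)
    (hv : v ∈ outerVals (n + 1) m a) (Q : Perm (Fin (n + 1)) → Prop) [DecidablePred Q] :
    #{π ∈ avoiders (sigmaP (l + m) l a) (n + 1) | π p = v ∧ Q π}
      = #{π' ∈ avoiders (sigmaP (l + m) l a) n | Q (insPerm p v π')} := by
  symm
  refine card_nbij' (insPerm p v) (delPerm p v) ?_ ?_ ?_ ?_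
  · intro π' hπ'
    simp only [coe_filter, mem_avoiders, Set.mem_ofPred_eq] at hπ' ⊢
    exact ⟨hπ'.1.insPerm ha hp hv, insPerm_apply_self p v π', hπ'.2⟩
  · intro π hπ
    simp only [coe_filter, mem_avoiders, Set.mem_ofPred_eq] at hπ ⊢
    exact ⟨hπ.1.delPerm hπ.2.1, (insPerm_delPerm hπ.2.1).symm ▸ hπ.2.2⟩
  · exact fun π' _ => delPerm_insPerm π'
  · intro π hπ
    simp only [coe_filter, mem_avoiders, Set.mem_ofPred_eq] at hπ
    exact insPerm_delPerm hπ.2.1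

theorem card_filter_avoiders_forall_mem_outerVals (ha : a ≤ m) (s W : Finset (Fin n))
    (hs : ∀ p ∈ s, (p : ℕ) < l) (hW : W ⊆ outerVals n m a) :
    #{π ∈ avoiders (sigmaP (l + m) l a) n | ∀ p ∈ s, π p ∈ W}
      = (#W).descFactorial #s * avoidersCard (l + m) (sigmaP (l + m) l a) (n - #s) := by
  induction hj : #s generalizing n s W with
  | zero =>
    rw [card_eq_zero.1 hj]
    simp [avoidersCard_eq_card_avoiders]
  | succ j ih =>
    obtain ⟨p, hp⟩ := card_pos.1 (by omega : 0 < #s)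
    obtain ⟨n, rfl⟩ := Nat.exists_eq_succ_of_ne_zero p.pos.ne'
    set s' := s.preimage p.succAbove Fin.succAbove_right_injective.injOn
    have hs' : #s' = j := by rw [card_preimage_succAbove, card_erase_of_mem hp, hj]; rfl
    calc #{π ∈ avoiders (sigmaP (l + m) l a) (n + 1) | ∀ q ∈ s, π q ∈ W}
        = ∑ v ∈ W, #{π ∈ avoiders (sigmaP (l + m) l a) (n + 1) | π p = v ∧
            ∀ x ∈ s', π (p.succAbove x) ∈ W} := card_filter_forall_mem_eq_sum hp _ W
      _ = ∑ v ∈ W, #{π' ∈ avoiders (sigmaP (l + m) l a) n |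
            ∀ x ∈ s', π' x ∈ W.preimage v.succAbove Fin.succAbove_right_injective.injOn} := by
          refine sum_congr rfl fun v hv => ?_
          rw [card_filter_avoiders_apply_eq ha (hs p hp) (hW hv)]
          simp only [insPerm_apply_succAbove, mem_preimage]
      _ = ∑ v ∈ W, (#W - 1).descFactorial j *
            avoidersCard (l + m) (sigmaP (l + m) l a) (n - j) := by
          refine sum_congr rfl fun v hv => ?_
          rw [ih s' _ (fun x hx => ?_) (fun w hw => ?_) hs', card_preimage_succAbove,
            card_erase_of_mem hv]
          · exact (val_le_of_strictMono (Fin.strictMono_succAbove p) x).trans_lt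
              (hs _ (mem_preimage.1 hx))
          · exact mem_outerVals_of_succAbove_mem (hW (mem_preimage.1 hw))
      _ = (#W).descFactorial (j + 1) *
            avoidersCard (l + m) (sigmaP (l + m) l a) (n + 1 - (j + 1)) := by
          rw [sum_const, smul_eq_mul, Nat.add_sub_add_right, ← mul_assoc,
            mul_descFactorial_sub_one]

end Sigma

lemma ACount_eq_card_filter_avoiders {l m a n d : ℕ} (hdn : d ≤ n) :
    ACount l m a n d = #{π ∈ avoiders (sigmaP (l + m) l a) n |
      ∀ q : Fin n, (q : ℕ) < d → π q ∉ outerVals n m a} := by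
  set S := {π ∈ avoiders (sigmaP (l + m) l a) n |
      ∀ q : Fin n, (q : ℕ) < d → π q ∉ outerVals n m a}
  have hmaps : ∀ π ∈ S, (fun q : Fin d => (π (Fin.castLE hdn q) : ℕ) + 1)
      ∈ Fintype.piFinset fun _ : Fin d => Icc (a + 1) (n - m + a) := by
    intro π hπ
    simp only [S, outerVals, mem_filter, mem_univ, true_and] at hπ
    simp only [Fintype.mem_piFinset, mem_Icc]
    intro q
    have := hπ.2 (Fin.castLE hdn q) q.isLt
    omega
  rw [ACount, card_eq_sum_card_fiberwise hmaps]
  refine sum_congr rfl fun iv hiv => ?_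
  rw [gCount, ncard_setOf_PAvoids_and, filter_filter]
  congr 1
  ext π
  simp only [mem_filter, Nat.add_sub_cancel]
  refine and_congr_right fun _ => ⟨fun h => ?_, ?_⟩
  · have hval (q : Fin d) : (π (Fin.castLE hdn q) : ℕ) + 1 = iv q := by
      simpa [q.isLt] using h (Fin.castLE hdn q) q.isLt
    refine ⟨fun q hq => ?_, funext hval⟩
    have h₁ := hval ⟨q, hq⟩
    have h₂ := Fintype.mem_piFinset.1 hiv ⟨q, hq⟩
    simp only [Fin.castLE_mk, Fin.eta, mem_Icc] at h₁ h₂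
    simp only [outerVals, mem_filter, mem_univ, true_and]
    omega
  · rintro ⟨-, rfl⟩ j hj
    simp [hj]

theorem ACount_formula_general (l m a n d : ℕ)
    (ha : a ≤ m) (hn : l + m ≤ n) (hdl : d ≤ l) :
    (ACount l m a n d : ℤ)
      = ∑ j ∈ Finset.range (d + 1),
          (-1 : ℤ) ^ j * (j.factorial : ℤ) * (m.choose j) * (d.choose j) *
            (avoidersCard (l + m) (sigmaP (l + m) l a) (n - j) : ℤ) := by
  have hdn : d ≤ n := by omega
  set D : Finset (Fin n) := {q | (q : ℕ) < d}
  have hD : #D = d := by rw [Fin.card_filter_val_lt]; omega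
  calc (ACount l m a n d : ℤ)
      = #{π ∈ avoiders (sigmaP (l + m) l a) n | ∀ q ∈ D, π q ∉ outerVals n m a} := by
        simp [ACount_eq_card_filter_avoiders hdn, D]
    _ = ∑ t ∈ D.powerset, (-1 : ℤ) ^ #t *
          #{π ∈ avoiders (sigmaP (l + m) l a) n | ∀ q ∈ t, π q ∈ outerVals n m a} := by
        -- the two sides differ only in their decidability instances
        convert card_filter_forall_not_eq_sum_powerset _ D
          (fun q (π : Perm (Fin n)) => π q ∈ outerVals n m a)
    _ = ∑ t ∈ D.powerset, (-1 : ℤ) ^ #t * (m.descFactorial #t *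
          avoidersCard (l + m) (sigmaP (l + m) l a) (n - #t) : ℕ) := by
        refine sum_congr rfl fun t ht => ?_
        rw [card_filter_avoiders_forall_mem_outerVals ha t _ (fun q hq => ?_) subset_rfl,
          card_outerVals ha (by omega)]
        have := mem_filter.1 (mem_powerset.1 ht hq)
        omega
    _ = ∑ j ∈ range (d + 1), d.choose j • ((-1 : ℤ) ^ j *
          (m.descFactorial j * avoidersCard (l + m) (sigmaP (l + m) l a) (n - j) : ℕ)) := by
        rw [← hD]
        exact sum_powerset_apply_card fun j => (-1 : ℤ) ^ j *
          (m.descFactorial j * avoidersCard (l + m) (sigmaP (l + m) l a) (n - j) : ℕ)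
    _ = _ := sum_congr rfl fun j _ => by
        rw [Nat.descFactorial_eq_factorial_mul_choose, nsmul_eq_mul]
        push_cast
        ring

theorem ACount_formula (l m a n d : ℕ) (hl : 1 ≤ l) (hm : 1 ≤ m)
    (ha : a ≤ m) (hn : l + m ≤ n) (hd : 1 ≤ d) (hdl : d ≤ l) :
    (ACount l m a n d : ℤ)
      = ∑ j ∈ Finset.range (d + 1),
          (-1 : ℤ) ^ j * (j.factorial : ℤ) * (m.choose j) * (d.choose j) *
            (avoidersCard (l + m) (sigmaP (l + m) l a) (n - j) : ℤ) :=
  ACount_formula_general l m a n d ha hn hdl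
end
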